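/- For every natural number x and every natural number n ≥ 1, [x]_f [x−1]_f ⋯ [x−n+1]_f = Σ_{j=0}^{n} s_f(n,j) · [x]_f^j, where [m]_f = ε_m = (1 − (−1)^m)/2. -/

import Mathlib

open Finset

/-- `ε_n = (1 - (-1)^n)/2`, so `ε_n = 0` for even `n` and `ε_n = 1` for odd `n`. -/
def eps (n : ℕ) : ℤ := (1 - (-1 : ℤ) ^ n) / 2

/-- The fermionic Stirling numbers of the first kind, defined by the recurrence
`s_f(n+1,k) = (-1)^n s_f(n,k-1) + (-1)^{n+1} ε_n s_f(n,k)`, with `s_f(0,0) = 1`,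
`s_f(n,0) = 0` for `n ≥ 1`, and `s_f(n,k) = 0` for `k > n`. -/
def sf : ℕ → ℕ → ℤ
  | 0, 0 => 1
  | 0, _ + 1 => 0
  | _ + 1, 0 => 0
  | n + 1, k + 1 => (-1 : ℤ) ^ n * sf n k + (-1 : ℤ) ^ (n + 1) * eps n * sf n (k + 1)

/-- `ε_m = (1 - (-1)^m)/2` for an integer `m` (valued in `ℚ`): the fermionic basic
number `[m]_f`. -/
noncomputable def epsZ (m : ℤ) : ℚ := (1 - (-1 : ℚ) ^ m) / 2

/-! The factors of the fermionic falling factorial are affine in `[x]_f`: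
`[x - n]_f = (-1)^n [x]_f + (-1)^(n+1) ε_n`, because shifting by `n` flips the parity of `x`
exactly when `n` is odd. Multiplying by this factor is precisely the recurrence defining `s_f`,
so the expansion follows by induction on `n`, as for the classical Stirling numbers. -/

lemma eps_of_even {n : ℕ} (h : Even n) : eps n = 0 := by
  simp [eps, h.neg_one_pow]

lemma eps_of_odd {n : ℕ} (h : Odd n) : eps n = 1 := by
  simp [eps, h.neg_one_pow]

lemma cast_eps {R : Type*} [DivisionRing R] [CharZero R] (n : ℕ) :
    (eps n : R) = (1 - (-1) ^ n) / 2 := by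
  rcases n.even_or_odd with h | h
  · simp [eps_of_even h, h.neg_one_pow]
  · rw [eps_of_odd h, h.neg_one_pow]
    norm_num

lemma epsZ_sub_natCast (x : ℤ) (n : ℕ) :
    epsZ (x - n) = (-1) ^ n * epsZ x + (-1) ^ (n + 1) * eps n := by
  have hsq : ((-1 : ℚ) ^ n) ^ 2 = 1 := by rw [← pow_mul, mul_comm, pow_mul, neg_one_sq, one_pow]
  rw [epsZ, epsZ, cast_eps, zpow_sub₀ (by norm_num), zpow_natCast,
    div_eq_mul_inv ((-1 : ℚ) ^ x), ← inv_pow, inv_neg_one]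
  linear_combination (-1 / 2 : ℚ) * hsq

lemma eps_mul_sf_zero (n : ℕ) : eps n * sf n 0 = 0 := by
  cases n with
  | zero => decide
  | succ n => exact mul_zero _

lemma sf_eq_zero_of_lt : ∀ {n k : ℕ}, n < k → sf n k = 0
  | 0, _ + 1, _ => rfl
  | n + 1, k + 1, h => by
    rw [sf, sf_eq_zero_of_lt (by omega : n < k), sf_eq_zero_of_lt (by omega : n < k + 1)]
    ring

lemma sum_sf_succ_mul_pow {R : Type*} [CommRing R] (n : ℕ) (t : R) :
    ∑ j ∈ range (n + 2), (sf (n + 1) j : R) * t ^ j =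
      (∑ j ∈ range (n + 1), (sf n j : R) * t ^ j) *
        ((-1) ^ n * t + (-1) ^ (n + 1) * eps n) := by
  set P := ∑ j ∈ range (n + 1), (sf n j : R) * t ^ j
  have hshift : ∑ j ∈ range (n + 1), (sf n (j + 1) : R) * t ^ (j + 1) = P - sf n 0 := by
    have h := sum_range_succ' (fun j => (sf n j : R) * t ^ j) (n + 1)
    rw [sum_range_succ, sf_eq_zero_of_lt (by omega : n < n + 1), Int.cast_zero, zero_mul,
      add_zero, pow_zero, mul_one] at h
    rw [eq_sub_iff_add_eq, ← h]
  have hvanish : (eps n : R) * sf n 0 = 0 := by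
    rw [← Int.cast_mul, eps_mul_sf_zero, Int.cast_zero]
  have hfirst :
      ∑ j ∈ range (n + 1), (-1) ^ n * (sf n j : R) * t ^ (j + 1) = (-1) ^ n * t * P := by
    rw [mul_sum]
    exact sum_congr rfl fun j _ => by ring
  have hsecond :
      ∑ j ∈ range (n + 1), (-1) ^ (n + 1) * (eps n : R) * sf n (j + 1) * t ^ (j + 1) =
        (-1) ^ (n + 1) * eps n * (P - sf n 0) := by
    rw [← hshift, mul_sum]
    exact sum_congr rfl fun j _ => by ring
  rw [sum_range_succ']
  simp only [sf, Int.cast_add, Int.cast_mul, Int.cast_pow, Int.cast_neg, Int.cast_one,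
    Int.cast_zero, zero_mul, add_zero, add_mul, sum_add_distrib]
  rw [hfirst, hsecond]
  linear_combination (-(-1 : R) ^ (n + 1)) * hvanish

theorem fermionicFallingFactorial_eq_sum_sf_pow_general (x n : ℕ) :
    (∏ i ∈ Finset.range n, epsZ ((x : ℤ) - i)) =
      ∑ j ∈ Finset.range (n + 1), (sf n j : ℚ) * epsZ (x : ℤ) ^ j := by
  induction n with
  | zero => simp [sf]
  | succ n ih => rw [prod_range_succ, ih, epsZ_sub_natCast, sum_sf_succ_mul_pow]

theorem fermionicFallingFactorial_eq_sum_sf_pow (x n : ℕ) (hn : 1 ≤ n) :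
    (∏ i ∈ Finset.range n, epsZ ((x : ℤ) - i)) =
      ∑ j ∈ Finset.range (n + 1), (sf n j : ℚ) * epsZ (x : ℤ) ^ j :=
  fermionicFallingFactorial_eq_sum_sf_pow_general x n
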